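/- arXiv:1207.1883 — 4 statements merged into one kernel-verified Lean document; each statement's English description precedes it below -/
import Mathlib

section
/- For any integers d ≥ 1 and N ≥ 1, the greatest common divisor of the integers χ_{d,n} = 1 - (-1)^n * C(d-1, n) for 1 ≤ n ≤ N equals I_{d,N}, defined as the gcd of the integers d/δ over all δ ∈ {1,…,N} dividing d. -/
/-- `I_{d,N} = gcd { d/δ : δ ∈ {1,…,N}, δ ∣ d }`. -/
def Idn (d N : ℕ) : ℕ :=
  Finset.gcd ((Finset.Icc 1 N).filter (fun δ => δ ∣ d)) (fun δ => d / δ)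

/-- `χ_{d,n} = 1 - (-1)^n * C(d-1, n)`. -/
def chiHyp (d n : ℕ) : ℤ := 1 - (-1) ^ n * ((d - 1).choose n : ℤ)

/-
Since `χ_{d,0} = 0` and `χ_{d,n+1} - χ_{d,n} = ±C(d,n+1)`, the `χ_{d,n}` and the `C(d,n)` with
`1 ≤ n ≤ N` have the same gcd. Each `C(d,n)` is divisible by `d / gcd(d,n)`, and `gcd(d,n)` is one
of the `δ`. Conversely, if `δ ∣ d`, `δ ≤ N` and `p^j` is the exact power of `p` in `δ`, then
`p^j C(d,p^j) = d C(d-1,p^j-1)` with `C(d-1,p^j-1) ≡ 1 mod p` by Lucas's theorem, so `C(d,p^j)`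
has exactly the `p`-adic valuation of `d/δ`.
-/

open Finset

theorem Finset.gcd_Icc_natAbs_eq_of_natAbs_sub {f g : ℕ → ℤ} (h0 : f 0 = 0)
    (hstep : ∀ n, (f (n + 1) - f n).natAbs = (g (n + 1)).natAbs) (N : ℕ) :
    (Icc 1 N).gcd (fun n => (f n).natAbs) = (Icc 1 N).gcd (fun n => (g n).natAbs) := by
  set F := (Icc 1 N).gcd (fun n => (f n).natAbs)
  set G := (Icc 1 N).gcd (fun n => (g n).natAbs)
  have hF : ∀ n ≤ N, (F : ℤ) ∣ f n := by
    rintro (_ | n) hn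
    · simp [h0]
    · exact Int.natCast_dvd.2 (gcd_dvd (mem_Icc.2 ⟨by omega, hn⟩))
  have hG : ∀ n ≤ N, (G : ℤ) ∣ f n := by
    intro n hn
    induction n with
    | zero => simp [h0]
    | succ n ih =>
      have hstepG : (G : ℤ) ∣ f (n + 1) - f n := by
        rw [Int.natCast_dvd, hstep]
        exact gcd_dvd (mem_Icc.2 ⟨by omega, hn⟩)
      simpa using dvd_add (ih (by omega)) hstepG
  apply Nat.dvd_antisymm
  · refine Finset.dvd_gcd fun n hn => ?_
    obtain ⟨m, rfl⟩ : ∃ m, n = m + 1 := ⟨n - 1, by grind⟩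
    have hm := (mem_Icc.1 hn).2
    rw [← hstep, ← Int.natCast_dvd]
    exact dvd_sub (hF _ hm) (hF _ (by omega))
  · exact Finset.dvd_gcd fun n hn => Int.natCast_dvd.1 (hG n (mem_Icc.1 hn).2)

theorem chiHyp_zero (d : ℕ) : chiHyp d 0 = 0 := by
  simp [chiHyp]

theorem chiHyp_succ_sub {d : ℕ} (hd : 1 ≤ d) (n : ℕ) :
    chiHyp d (n + 1) - chiHyp d n = (-1) ^ n * (d.choose (n + 1) : ℤ) := by
  obtain ⟨c, rfl⟩ : ∃ c, d = c + 1 := ⟨d - 1, by omega⟩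
  simp only [chiHyp, Nat.add_sub_cancel, Nat.choose_succ_succ', Nat.cast_add]
  ring

theorem Nat.div_gcd_dvd_choose {d n : ℕ} (hn : 0 < n) : d / d.gcd n ∣ d.choose n := by
  have hdvd : d ∣ n * d.choose n := by
    obtain ⟨m, rfl⟩ : ∃ m, n = m + 1 := ⟨n - 1, by omega⟩
    rcases d with _ | c
    · simp
    · exact ⟨c.choose m, by rw [mul_comm, ← Nat.add_one_mul_choose_eq]⟩
  have hg : 0 < d.gcd n := Nat.gcd_pos_of_pos_right d hn
  refine (Nat.coprime_div_gcd_div_gcd hg).dvd_of_dvd_mul_left ?_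
  rw [← Nat.mul_div_right_comm (Nat.gcd_dvd_right d n)]
  exact Nat.div_dvd_div (Nat.gcd_dvd_left d n) hdvd

theorem Nat.choose_pow_mul_add_modEq {p : ℕ} [Fact p.Prime] {j r : ℕ} (hr : r < p ^ j) (a b : ℕ) :
    (p ^ j * a + r).choose (p ^ j * b + r) ≡ a.choose b [MOD p] := by
  induction j generalizing r with
  | zero =>
    obtain rfl : r = 0 := by simpa using hr
    simp [Nat.ModEq.refl]
  | succ j ih =>
    have hp : 0 < p := (Fact.out : p.Prime).pos
    have split (c : ℕ) : p ^ (j + 1) * c + r = r % p + p * (p ^ j * c + r / p) := by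
      conv_lhs => rw [← Nat.mod_add_div r p]
      ring
    rw [split a, split b]
    refine Choose.choose_modEq_choose_mod_mul_choose_div_nat.trans ?_
    simp only [Nat.add_mul_mod_self_left, Nat.mod_mod, Nat.add_mul_div_left _ _ hp,
      Nat.div_eq_of_lt (Nat.mod_lt r hp), zero_add, Nat.choose_self, one_mul]
    exact ih (Nat.div_lt_of_lt_mul (by rwa [← pow_succ']))

theorem Nat.Prime.not_dvd_choose_pred {p d j : ℕ} (hp : p.Prime) (hd : d ≠ 0) (h : p ^ j ∣ d) :
    ¬ p ∣ (d - 1).choose (p ^ j - 1) := by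
  have := Fact.mk hp
  obtain ⟨q, rfl⟩ := h
  have hpj : 0 < p ^ j := pow_pos hp.pos j
  have hq : 0 < q := Nat.pos_of_mul_pos_left (Nat.pos_of_ne_zero hd)
  have hlucas := Nat.choose_pow_mul_add_modEq (Nat.sub_lt hpj one_pos) (q - 1) 0
  rw [mul_zero, zero_add, Nat.choose_zero_right,
    show p ^ j * (q - 1) + (p ^ j - 1) = p ^ j * q - 1 by
      have := Nat.le_mul_of_pos_right (p ^ j) hq
      rw [Nat.mul_sub_one]; omega] at hlucas
  rw [hlucas.dvd_iff dvd_rfl]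
  exact hp.not_dvd_one

theorem Nat.Prime.factorization_choose_of_pow_dvd {p d j : ℕ} (hp : p.Prime) (hd : d ≠ 0)
    (h : p ^ j ∣ d) : (d.choose (p ^ j)).factorization p = d.factorization p - j := by
  have hpj : 0 < p ^ j := pow_pos hp.pos j
  have hchoose : d.choose (p ^ j) ≠ 0 := (Nat.choose_pos (Nat.le_of_dvd (by omega) h)).ne'
  have hpred : (d - 1).choose (p ^ j - 1) ≠ 0 := fun h0 =>
    hp.not_dvd_choose_pred hd h (h0 ▸ dvd_zero p)
  have key : d * (d - 1).choose (p ^ j - 1) = d.choose (p ^ j) * p ^ j := by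
    simpa [Nat.sub_add_cancel (Nat.one_le_iff_ne_zero.2 hd), Nat.sub_add_cancel hpj]
      using Nat.add_one_mul_choose_eq (d - 1) (p ^ j - 1)
  have := congrArg (fun m => m.factorization p) key
  simp [Nat.factorization_mul hd hpred, Nat.factorization_mul hchoose hpj.ne',
    hp.factorization_pow, Nat.factorization_eq_zero_of_not_dvd (hp.not_dvd_choose_pred hd h)]
    at this
  omega

theorem gcd_Icc_choose_dvd_div {d δ N : ℕ} (hd : d ≠ 0) (hδd : δ ∣ d) (hδN : δ ≤ N) :
    (Icc 1 N).gcd d.choose ∣ d / δ := by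
  rw [Nat.dvd_iff_prime_pow_dvd_dvd]
  intro p k hp hk
  have hδ : δ ≠ 0 := ne_zero_of_dvd_ne_zero hd hδd
  set j := δ.factorization p
  have hpj_dvd : p ^ j ∣ d := (Nat.ordProj_dvd δ p).trans hδd
  have hpj_mem : p ^ j ∈ Icc 1 N :=
    mem_Icc.2 ⟨Nat.one_le_pow _ _ hp.pos, (Nat.ordProj_le p hδ).trans hδN⟩
  have hchoose : d.choose (p ^ j) ≠ 0 := (Nat.choose_pos (Nat.le_of_dvd (by omega) hpj_dvd)).ne'
  have hk_le := (hp.pow_dvd_iff_le_factorization hchoose).1 (hk.trans (gcd_dvd hpj_mem))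
  rw [hp.factorization_choose_of_pow_dvd hd hpj_dvd] at hk_le
  rw [hp.pow_dvd_iff_le_factorization (Nat.div_ne_zero_iff_of_dvd hδd |>.2 ⟨hd, hδ⟩),
    Nat.factorization_div hδd]
  exact hk_le

theorem gcd_Icc_choose_eq_Idn (d N : ℕ) : (Icc 1 N).gcd d.choose = Idn d N := by
  rcases eq_or_ne d 0 with rfl | hd
  · simp only [Idn, dvd_zero, filter_true, Nat.zero_div]
    exact gcd_congr rfl fun _ hn => Nat.choose_eq_zero_of_lt (mem_Icc.1 hn).1
  apply Nat.dvd_antisymm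
  · refine Finset.dvd_gcd fun δ hδ => ?_
    simp only [mem_filter, mem_Icc] at hδ
    exact gcd_Icc_choose_dvd_div hd hδ.2 hδ.1.2
  · refine Finset.dvd_gcd fun n hn => ?_
    have hn0 : 0 < n := (mem_Icc.1 hn).1
    have hgcd : d.gcd n ∈ (Icc 1 N).filter (· ∣ d) :=
      mem_filter.2 ⟨mem_Icc.2 ⟨Nat.gcd_pos_of_pos_right d hn0,
        (Nat.gcd_le_right (m := d) hn0).trans (mem_Icc.1 hn).2⟩, Nat.gcd_dvd_left d n⟩
    exact (gcd_dvd hgcd).trans (Nat.div_gcd_dvd_choose hn0)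

theorem gcd_chiHyp_eq_Idn_general (d N : ℕ) (hd : 1 ≤ d) :
    Finset.gcd (Finset.Icc 1 N) (fun n => (chiHyp d n).natAbs) = Idn d N := by
  have hstep (n : ℕ) :
      (chiHyp d (n + 1) - chiHyp d n).natAbs = (d.choose (n + 1) : ℤ).natAbs := by
    simp [chiHyp_succ_sub hd, Int.natAbs_mul, Int.natAbs_pow]
  rw [gcd_Icc_natAbs_eq_of_natAbs_sub (g := fun n => (d.choose n : ℤ)) (chiHyp_zero d) hstep]
  simpa using gcd_Icc_choose_eq_Idn d N

/-- For `d, N ≥ 1`, the gcd of the integers `χ_{d,n}` for `1 ≤ n ≤ N`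
equals `I_{d,N}`. -/
theorem gcd_chiHyp_eq_Idn (d N : ℕ) (hd : 1 ≤ d) (hN : 1 ≤ N) :
    Finset.gcd (Finset.Icc 1 N) (fun n => (chiHyp d n).natAbs) = Idn d N :=
  gcd_chiHyp_eq_Idn_general d N hd
end

section
/- Let d ≥ 1. The truncation to total degree ≤ d of the formal power series ∏_{j=1}^r ξ_j/(1 - exp(-ξ_j)) in Q[[ξ_1,…,ξ_r]] has all coefficients in Z[1/(d+1)!]. -/
/-!
Each coefficient is a product of factors `B⁺ₙ / n!` with `n ≤ d`, so it suffices to see that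
`B⁺ₙ ∈ ℤ[1/(n+1)!]`. This follows by strong induction from the recursion
`B⁺ₙ = 1 - ∑_{k<n} C(n,k) B⁺ₖ / (n - k + 1)`, whose new denominators `n - k + 1 ≤ n + 1`
divide `(n+1)!`.
-/

/-- The subring `ℤ[1/N]` of `ℚ`. -/
def intAdjoinInv (N : ℕ) : Subring ℚ where
  carrier := {q | ∃ (k : ℕ) (z : ℤ), q * (N : ℚ) ^ k = z}
  zero_mem' := ⟨0, 0, by simp⟩
  one_mem' := ⟨0, 1, by simp⟩
  add_mem' := by
    rintro a b ⟨k, x, hx⟩ ⟨l, y, hy⟩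
    refine ⟨k + l, x * N ^ l + y * N ^ k, ?_⟩
    push_cast
    linear_combination (N : ℚ) ^ l * hx + (N : ℚ) ^ k * hy
  mul_mem' := by
    rintro a b ⟨k, x, hx⟩ ⟨l, y, hy⟩
    refine ⟨k + l, x * y, ?_⟩
    push_cast
    linear_combination b * (N : ℚ) ^ l * hx + (x : ℚ) * hy
  neg_mem' := by
    rintro a ⟨k, x, hx⟩
    exact ⟨k, -x, by push_cast; linear_combination -hx⟩

namespace intAdjoinInv

lemma mem_iff {N : ℕ} {q : ℚ} : q ∈ intAdjoinInv N ↔ ∃ (k : ℕ) (z : ℤ), q * (N : ℚ) ^ k = z :=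
  Iff.rfl

lemma mono {M N : ℕ} (h : M ∣ N) : intAdjoinInv M ≤ intAdjoinInv N := by
  obtain ⟨t, rfl⟩ := h
  rintro q ⟨k, z, hz⟩
  exact ⟨k, z * t ^ k, by push_cast; rw [mul_pow, ← mul_assoc, hz]⟩

lemma inv_natCast_mem {c N : ℕ} (h : c ∣ N) : (c : ℚ)⁻¹ ∈ intAdjoinInv N := by
  obtain ⟨t, rfl⟩ := h
  rcases eq_or_ne c 0 with rfl | hc
  · simp
  · exact ⟨1, t, by push_cast; field_simp⟩

lemma bernoulli'_mem (n : ℕ) : bernoulli' n ∈ intAdjoinInv (n + 1).factorial := by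
  induction n using Nat.strong_induction_on with
  | _ n ih =>
    rw [bernoulli'_def]
    refine sub_mem (one_mem _) (sum_mem fun k hk => ?_)
    have hkn : k < n := Finset.mem_range.mp hk
    have hcast : (n : ℚ) - k + 1 = ((n - k + 1 : ℕ) : ℚ) := by push_cast [hkn.le]; ring
    rw [div_eq_mul_inv, hcast]
    refine mul_mem (mul_mem (natCast_mem _ _) (inv_natCast_mem ?_))
      (mono (Nat.factorial_dvd_factorial (by omega)) (ih k hkn))
    exact Nat.dvd_factorial (by omega) (by omega)

lemma bernoulli'_div_factorial_mem {n N : ℕ} (h : n ≤ N) :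
    bernoulli' n / n.factorial ∈ intAdjoinInv (N + 1).factorial :=
  div_eq_mul_inv (bernoulli' n) _ ▸ mul_mem
    (mono (Nat.factorial_dvd_factorial (by omega)) (bernoulli'_mem n))
    (inv_natCast_mem (Nat.factorial_dvd_factorial (by omega)))

end intAdjoinInv

theorem coeff_prod_todd_denominator_general (d r : ℕ)
    (F : MvPowerSeries (Fin r) ℚ)
    (hF : ∀ m : Fin r →₀ ℕ, MvPowerSeries.coeff m F =
      ∏ j : Fin r, bernoulli' (m j) / (m j).factorial)
    (m : Fin r →₀ ℕ) (hm : (m.sum fun _ n => n) ≤ d) :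
    ∃ (k : ℕ) (z : ℤ),
      MvPowerSeries.coeff m F * ((d + 1).factorial : ℚ) ^ k = z := by
  rw [hF, ← intAdjoinInv.mem_iff]
  refine prod_mem fun j _ => intAdjoinInv.bernoulli'_div_factorial_mem ?_
  exact (Finsupp.single_eval_le_sum m (g := id) rfl (fun _ => Nat.zero_le _) j).trans hm

/-- Let `F = ∏_{j=1}^r ξ_j/(1 - exp(-ξ_j))` in `ℚ[[ξ_1,…,ξ_r]]` (characterized
by its coefficients: the coefficient of the monomial `∏_j ξ_j^{m_j}` is
`∏_j B_{m_j}^+ / m_j!`, where `B_n^+` are the Bernoulli numbers with the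
convention `B_1^+ = 1/2`, i.e. `bernoulli'`).  Then every coefficient of `F`
of total degree `≤ d` lies in the subring `ℤ[1/(d+1)!]` of `ℚ`. -/
theorem coeff_prod_todd_denominator (d r : ℕ) (hd : 1 ≤ d)
    (F : MvPowerSeries (Fin r) ℚ)
    (hF : ∀ m : Fin r →₀ ℕ, MvPowerSeries.coeff m F =
      ∏ j : Fin r, bernoulli' (m j) / (m j).factorial)
    (m : Fin r →₀ ℕ) (hm : (m.sum fun _ n => n) ≤ d) :
    ∃ (k : ℕ) (z : ℤ),
      MvPowerSeries.coeff m F * ((d + 1).factorial : ℚ) ^ k = z :=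
  coeff_prod_todd_denominator_general d r F hF m hm
end

section
/- Let d, N, e be positive integers such that I_{d,N} does not divide e, where I_{d,N} = gcd { d/δ : δ ∈ {1,…,N}, δ ∣ d }. Then the map i ↦ i·e + d·a_i from {0,…,N} to Z is injective for every tuple (a_0,…,a_N) ∈ Z^{N+1}. -/
lemma key_aux (d N e : ℕ) (hd : 1 ≤ d) (hnd : ¬ Idn d N ∣ e) (a : ℕ → ℤ)
    (i j : ℕ) (hij : i < j) (hjN : j ≤ N)
    (h : (i : ℤ) * e + d * a i = (j : ℤ) * e + d * a j) : False := by
  set k := j - i with hk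
  have hk0 : 0 < k := Nat.sub_pos_of_lt hij
  set δ := Nat.gcd k d with hδ
  have hδ0 : 0 < δ := Nat.gcd_pos_of_pos_right _ hd
  have hδd : δ ∣ d := Nat.gcd_dvd_right k d
  have hδk : δ ∣ k := Nat.gcd_dvd_left k d
  have hδN : δ ≤ N := le_trans (Nat.le_of_dvd hk0 hδk) (le_trans (Nat.sub_le _ _) hjN)
  -- (j-i)*e = d*(a i - a j)
  have heq : (k : ℤ) * e = d * (a i - a j) := by
    have : ((j : ℤ) - i) * e = d * (a i - a j) := by ring_nf; linarith [h]
    rw [hk]; push_cast [Nat.cast_sub hij.le]; linarith [this]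
  obtain ⟨m, hm⟩ := hδk
  obtain ⟨n, hn⟩ := hδd
  have hn0 : 0 < n := by
    rcases Nat.eq_zero_or_pos n with h0 | h0
    · simp [h0] at hn; omega
    · exact h0
  have hcop : Nat.Coprime m n := by
    have := Nat.coprime_div_gcd_div_gcd (m := k) (n := d) hδ0
    rw [hm, hn] at this
    have hg : (δ * m).gcd (δ * n) = δ := by rw [← hm, ← hn]
    rwa [hg, Nat.mul_div_cancel_left _ hδ0, Nat.mul_div_cancel_left _ hδ0] at this
  -- n ∣ e
  have hne : (n : ℤ) ∣ (m : ℤ) * e := by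
    have heq2 : (δ : ℤ) * ((m : ℤ) * e) = (δ : ℤ) * ((n : ℤ) * (a i - a j)) := by
      push_cast [hm, hn] at heq ⊢; linarith [heq]
    have : (m : ℤ) * e = (n : ℤ) * (a i - a j) := by
      have hδz : (δ : ℤ) ≠ 0 := by exact_mod_cast hδ0.ne'
      exact mul_left_cancel₀ hδz heq2
    exact ⟨_, this⟩
  have hne' : n ∣ m * e := by exact_mod_cast hne
  have hnde : n ∣ e := (Nat.Coprime.dvd_of_dvd_mul_left (hcop.symm) hne')
  -- n = d / δ, and Idn divides d/δ
  have hdiv : d / δ = n := by rw [hn, Nat.mul_div_cancel_left _ hδ0]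
  have : Idn d N ∣ e := by
    refine dvd_trans ?_ hnde
    rw [← hdiv]
    exact Finset.gcd_dvd (by simp only [Finset.mem_filter, Finset.mem_Icc]; exact ⟨⟨hδ0, hδN⟩, ⟨n, hn⟩⟩)
  exact hnd this

/-- If `I_{d,N}` does not divide `e`, then for any tuple `(a_0, …, a_N)` of
integers, the map `i ↦ i·e + d·a_i` on `{0,…,N}` is injective. -/
theorem key_injectivity (d N e : ℕ) (hd : 1 ≤ d) (hN : 1 ≤ N) (he : 1 ≤ e)
    (hnd : ¬ Idn d N ∣ e) (a : ℕ → ℤ) :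
    ∀ i j : ℕ, i ≤ N → j ≤ N →
      (i : ℤ) * e + d * a i = (j : ℤ) * e + d * a j → i = j := by
  intro i j hi hj h
  rcases lt_trichotomy i j with hlt | heq | hgt
  · exact absurd h (fun h => key_aux d N e hd hnd a i j hlt hj h)
  · exact heq
  · exact absurd h.symm (fun h => key_aux d N e hd hnd a j i hgt hi h)
end

section
/- Let d ≥ 1 be an integer with prime factorization d = ∏ p_i^{α_i}, and let N_0 = max_i p_i^{α_i}. Then I_{d,N} = 1 if and only if N ≥ N_0, where I_{d,N} = gcd { d/δ : δ ∈ {1,…,N}, δ ∣ d }. -/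
theorem Nat.Prime.dvd_div_iff_not_ordProj_dvd {p d δ : ℕ} (hp : p.Prime) (hd : d ≠ 0)
    (hδ : δ ∣ d) : p ∣ d / δ ↔ ¬ p ^ d.factorization p ∣ δ := by
  have hδ0 : δ ≠ 0 := ne_zero_of_dvd_ne_zero hd hδ
  have hquot : d / δ ≠ 0 := (Nat.div_ne_zero_iff_of_dvd hδ).mpr ⟨hd, hδ0⟩
  rw [hp.dvd_iff_one_le_factorization hquot, Nat.factorization_div hδ,
    hp.pow_dvd_iff_le_factorization hδ0, Finsupp.coe_tsub, Pi.sub_apply]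
  omega

/-- For `p ∤ d` the right-hand side reads `N < 1`, consistent with `Idn d 0 = 0`. -/
theorem Nat.Prime.dvd_Idn_iff {p d N : ℕ} (hp : p.Prime) (hd : d ≠ 0) :
    p ∣ Idn d N ↔ N < p ^ d.factorization p := by
  simp only [Idn, Finset.dvd_gcd_iff, Finset.mem_filter, Finset.mem_Icc, and_imp]
  constructor
  · intro h
    by_contra! hle
    have hpow : p ^ d.factorization p ∣ d := Nat.ordProj_dvd d p
    exact (hp.dvd_div_iff_not_ordProj_dvd hd hpow).mp
      (h _ (Nat.one_le_pow _ _ hp.pos) hle hpow) dvd_rfl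
  · intro hlt δ hδ1 hδN hδd
    rw [hp.dvd_div_iff_not_ordProj_dvd hd hδd]
    exact fun hdvd => absurd (Nat.le_of_dvd hδ1 hdvd) (by omega)

/-- Let `d ≥ 1` with prime factorization `d = ∏ p^{α_p}` and let
`N₀ = max_p p^{α_p}` (the largest prime power appearing in `d`).
Then `I_{d,N} = 1` if and only if `N ≥ N₀`. -/
theorem Idn_eq_one_iff (d N : ℕ) (hd : 1 ≤ d) (hN : 1 ≤ N) :
    Idn d N = 1 ↔ d.primeFactors.sup (fun p => p ^ d.factorization p) ≤ N := by
  have hd0 : d ≠ 0 := by omega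
  rw [Nat.eq_one_iff_not_exists_prime_dvd, Finset.sup_le_iff]
  constructor
  · intro h p hp
    have hpp := Nat.prime_of_mem_primeFactors hp
    simpa [hpp.dvd_Idn_iff hd0] using h p hpp
  · intro h p hp
    rw [hp.dvd_Idn_iff hd0, not_lt]
    by_cases hpd : p ∈ d.primeFactors
    · exact h p hpd
    · rw [← Nat.support_factorization, Finsupp.notMem_support_iff] at hpd
      simpa [hpd] using hN
end
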